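/- Let covers : Fin n → Fin n → Prop with covers i j → i < j, and let M be a maximum matching in the bipartite graph with edge set {(i, j) : covers i j}, |M| = m. Then n - m chains suffice to partition Fin n, and no partition into fewer than n - m chains exists. -/

import Mathlib

/-!
The consecutive pairs of the chains of a partition into `t` chains form a matching with `n - t`
edges. Conversely, adding the edges of a matching one at a time to the partition into singletons,
each edge `(a, b)` glues the chain ending in `a` to the chain starting at `b`, so a matching with
`m` edges yields `n - m` chains. These two chains are distinct because chains increase while
`a < b`.
-/

/-- A partition of `Fin n` into chains: a list of lists, each of which is a
chain under `covers`, whose concatenation is a permutation of all of `Fin n`. -/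
def IsChainPartition (n : ℕ) (covers : Fin n → Fin n → Prop)
    (L : List (List (Fin n))) : Prop :=
  (∀ l ∈ L, l.Chain' covers) ∧ L.flatten.Perm (List.finRange n)

/-- A matching in the bipartite graph with parts `Fin n` (drop-offs) and
`Fin n` (pickups) and edges `{(i, j) : covers i j}`. -/
def IsMatching (n : ℕ) (covers : Fin n → Fin n → Prop)
    (M : Finset (Fin n × Fin n)) : Prop :=
  (∀ e ∈ M, covers e.1 e.2) ∧
  (∀ e ∈ M, ∀ e' ∈ M, e.1 = e'.1 → e = e') ∧
  (∀ e ∈ M, ∀ e' ∈ M, e.2 = e'.2 → e = e')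

namespace List

variable {α : Type*}

theorem map_fst_consecutivePairs (l : List α) : l.consecutivePairs.map Prod.fst = l.dropLast := by
  induction l with
  | nil => rfl
  | cons a l ih => cases l <;> simp_all [consecutivePairs]

theorem map_snd_consecutivePairs (l : List α) : l.consecutivePairs.map Prod.snd = l.tail :=
  map_snd_zip (by simp)

theorem length_consecutivePairs (l : List α) : l.consecutivePairs.length = l.length - 1 := by
  simp

theorem IsChain.rel_of_mem_consecutivePairs {R : α → α → Prop} {l : List α} (h : IsChain R l)
    {e : α × α} (he : e ∈ l.consecutivePairs) : R e.1 e.2 := by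
  obtain ⟨i, hi, rfl⟩ := mem_iff_getElem.1 he
  simp only [length_zip, length_tail, lt_min_iff] at hi
  simpa using isChain_iff_getElem.1 h i (by omega)

theorem flatMap_sublist_flatten {f : List α → List α} (hf : ∀ l, f l <+ l)
    (L : List (List α)) : L.flatMap f <+ L.flatten := by
  induction L with
  | nil => simp
  | cons l L ih => simpa using (hf l).append ih

theorem length_flatten_le_length_flatMap_consecutivePairs_add (L : List (List α)) :
    L.flatten.length ≤ (L.flatMap consecutivePairs).length + L.length := by
  induction L with
  | nil => simp
  | cons l L ih => simp only [flatten_cons, flatMap_cons, length_append, length_cons,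
      length_consecutivePairs] at ih ⊢; omega

theorem nodup_map_fst_flatMap_consecutivePairs {L : List (List α)} (h : L.flatten.Nodup) :
    ((L.flatMap consecutivePairs).map Prod.fst).Nodup := by
  rw [map_flatMap]
  simp only [map_fst_consecutivePairs]
  exact h.sublist (flatMap_sublist_flatten dropLast_sublist L)

theorem nodup_map_snd_flatMap_consecutivePairs {L : List (List α)} (h : L.flatten.Nodup) :
    ((L.flatMap consecutivePairs).map Prod.snd).Nodup := by
  rw [map_flatMap]
  simp only [map_snd_consecutivePairs]
  exact h.sublist (flatMap_sublist_flatten tail_sublist L)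

theorem IsChain.exists_eq_concat_of_forall_not_rel {R : α → α → Prop} {l : List α}
    (h : IsChain R l) {a : α} (ha : a ∈ l) (hR : ∀ b, ¬ R a b) : ∃ s, l = s ++ [a] := by
  obtain ⟨s, t, rfl⟩ := append_of_mem ha
  cases t with
  | nil => exact ⟨s, rfl⟩
  | cons b t => exact absurd (isChain_append_cons_cons.1 h).2.1 (hR b)

theorem IsChain.exists_eq_cons_of_forall_not_rel {R : α → α → Prop} {l : List α}
    (h : IsChain R l) {b : α} (hb : b ∈ l) (hR : ∀ a, ¬ R a b) : ∃ t, l = b :: t := by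
  obtain ⟨s, hs⟩ :=
    (isChain_reverse.2 h).exists_eq_concat_of_forall_not_rel (mem_reverse.2 hb) hR
  exact ⟨s.reverse, by simpa using congrArg reverse hs⟩

theorem concat_ne_cons_of_isChain_lt [Preorder α] {s t : List α} {a b : α}
    (h : (b :: t).IsChain (· < ·)) (hab : a < b) : s ++ [a] ≠ b :: t := by
  intro heq
  rcases mem_cons.1 (heq ▸ mem_concat_self : a ∈ b :: t) with rfl | ha
  · exact hab.false
  · exact hab.not_gt (rel_of_pairwise_cons h.pairwise ha)

theorem exists_perm_cons_cons_of_mem_of_ne [DecidableEq α] {L : List α} {a b : α}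
    (ha : a ∈ L) (hb : b ∈ L) (hab : a ≠ b) : ∃ rest, L.Perm (a :: b :: rest) :=
  ⟨_, (perm_cons_erase ha).trans ((perm_cons_erase ((mem_erase_of_ne hab.symm).2 hb)).cons a)⟩

end List

open List

theorem exists_chains_length_add_card_eq {α : Type*} [DecidableEq α] [Preorder α] {U : List α}
    (hU : ∀ a, a ∈ U) {M : Finset (α × α)} (hlt : ∀ e ∈ M, e.1 < e.2)
    (hfst : Set.InjOn Prod.fst (M : Set (α × α)))
    (hsnd : Set.InjOn Prod.snd (M : Set (α × α))) :
    ∃ L : List (List α), (∀ l ∈ L, l.IsChain fun a b => (a, b) ∈ M) ∧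
      L.flatten.Perm U ∧ L.length + M.card = U.length := by
  induction M using Finset.induction_on with
  | empty => exact ⟨U.map ([·]), by simp, by simp [← flatMap_def], by simp⟩
  | insert e M he ih =>
    obtain ⟨L, hchain, hperm, hlen⟩ := ih (fun f hf => hlt f (Finset.mem_insert_of_mem hf))
      (hfst.mono (Finset.coe_subset.2 (Finset.subset_insert e M)))
      (hsnd.mono (Finset.coe_subset.2 (Finset.subset_insert e M)))
    have he_mem : e ∈ insert e M := Finset.mem_insert_self e M
    have hout : ∀ b, (e.1, b) ∉ M := fun b hb => he <| by
      rwa [← hfst (Finset.mem_insert_of_mem hb) he_mem rfl]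
    have hin : ∀ a, (a, e.2) ∉ M := fun a ha => he <| by
      rwa [← hsnd (Finset.mem_insert_of_mem ha) he_mem rfl]
    obtain ⟨l₁, hl₁, h₁⟩ := mem_flatten.1 (hperm.mem_iff.2 (hU e.1))
    obtain ⟨l₂, hl₂, h₂⟩ := mem_flatten.1 (hperm.mem_iff.2 (hU e.2))
    obtain ⟨s, rfl⟩ := (hchain _ hl₁).exists_eq_concat_of_forall_not_rel h₁ hout
    obtain ⟨t, rfl⟩ := (hchain _ hl₂).exists_eq_cons_of_forall_not_rel h₂ hin
    have hne : s ++ [e.1] ≠ e.2 :: t := concat_ne_cons_of_isChain_lt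
      ((hchain _ hl₂).imp fun a b hab => hlt _ (Finset.mem_insert_of_mem hab)) (hlt e he_mem)
    obtain ⟨rest, hrest⟩ := exists_perm_cons_cons_of_mem_of_ne hl₁ hl₂ hne
    have hmono : ∀ l ∈ L, l.IsChain fun a b => (a, b) ∈ insert e M := fun l hl =>
      (hchain l hl).imp fun a b hab => Finset.mem_insert_of_mem hab
    refine ⟨(s ++ e.1 :: e.2 :: t) :: rest, ?_, ?_, ?_⟩
    · rintro l (_ | ⟨_, hl⟩)
      · exact isChain_append_cons_cons.2 ⟨hmono _ hl₁, he_mem, hmono _ hl₂⟩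
      · exact hmono l (hrest.symm.subset (mem_cons_of_mem _ (mem_cons_of_mem _ hl)))
    · have : ((s ++ e.1 :: e.2 :: t) :: rest).flatten
          = ((s ++ [e.1]) :: (e.2 :: t) :: rest).flatten := by simp
      exact this ▸ hrest.flatten.symm.trans hperm
    · have := hrest.length_eq
      simp only [length_cons] at this ⊢
      rw [Finset.card_insert_of_notMem he]
      omega

section ChainPartition

variable {n : ℕ} {covers : Fin n → Fin n → Prop} {L : List (List (Fin n))}

theorem IsChainPartition.nodup_flatten (hL : IsChainPartition n covers L) : L.flatten.Nodup :=
  hL.2.nodup_iff.2 (nodup_finRange n)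

theorem IsChainPartition.isMatching_consecutivePairs (hL : IsChainPartition n covers L) :
    IsMatching n covers (L.flatMap consecutivePairs).toFinset := by
  refine ⟨fun e he => ?_, fun e he e' he' => ?_, fun e he e' he' => ?_⟩
  · obtain ⟨l, hl, hel⟩ := mem_flatMap.1 (mem_toFinset.1 he)
    exact IsChain.rel_of_mem_consecutivePairs (hL.1 l hl) hel
  · exact inj_on_of_nodup_map (nodup_map_fst_flatMap_consecutivePairs hL.nodup_flatten)
      (mem_toFinset.1 he) (mem_toFinset.1 he')
  · exact inj_on_of_nodup_map (nodup_map_snd_flatMap_consecutivePairs hL.nodup_flatten)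
      (mem_toFinset.1 he) (mem_toFinset.1 he')

theorem IsChainPartition.le_card_consecutivePairs_add_length (hL : IsChainPartition n covers L) :
    n ≤ (L.flatMap consecutivePairs).toFinset.card + L.length := by
  rw [toFinset_card_of_nodup ((nodup_map_fst_flatMap_consecutivePairs hL.nodup_flatten).of_map _)]
  simpa [hL.2.length_eq] using length_flatten_le_length_flatMap_consecutivePairs_add L

end ChainPartition

/-- If `M` is a maximum matching of size `m`, then `n - m` chains suffice to
partition `Fin n` and no partition into fewer chains exists. -/
theorem stmt_11 (n m : ℕ) (covers : Fin n → Fin n → Prop)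
    (hlt : ∀ i j, covers i j → i < j)
    (M : Finset (Fin n × Fin n)) (hM : IsMatching n covers M)
    (hmax : ∀ M' : Finset (Fin n × Fin n), IsMatching n covers M' → M'.card ≤ M.card)
    (hm : M.card = m) :
    (∃ L : List (List (Fin n)), L.length = n - m ∧ IsChainPartition n covers L) ∧
    (∀ L : List (List (Fin n)), IsChainPartition n covers L → n - m ≤ L.length) := by
  constructor
  · obtain ⟨L, hchain, hperm, hlen⟩ := exists_chains_length_add_card_eq mem_finRange
      (fun e he => hlt _ _ (hM.1 e he)) hM.2.1 hM.2.2
    rw [length_finRange] at hlen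
    exact ⟨L, by omega, fun l hl => (hchain l hl).imp fun a b hab => hM.1 _ hab, hperm⟩
  · intro L hL
    have hcard := hmax _ hL.isMatching_consecutivePairs
    have hcount := hL.le_card_consecutivePairs_add_length
    omega
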